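/- Let j ≥ 0 be an integer and m3, m4 integers with |m3| ≤ j and |m4| ≤ j. If m3 > m4, then e^{i(m4−m3)π/2} · d^j_{m3,m4}(3π/2) = i^{m3−m4} · 2^{−j} / ((j−m3)!·(m3−m4)!·(j+m4)!) · Σ_{k=0}^{min(j−m3, j+m4)} ((−j+m3)^{(k)}·(−j−m4)^{(k)} / ((1+m3−m4)^{(k)}·k!)) · (−1)^k. If m3 ≤ m4, then e^{i(m4−m3)π/2} · d^j_{m3,m4}(3π/2) = i^{m4−m3} · 2^{−j} / ((j+m3)!·(m4−m3)!·(j−m4)!) · Σ_{k=0}^{min(j+m3, j−m4)} ((−j−m3)^{(k)}·(−j+m4)^{(k)} / ((1−m3+m4)^{(k)}·k!)) · (−1)^k. -/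

import Mathlib

/-
At `θ = 3π/2` we have `sin (θ/2) = √2/2` and `cos (θ/2) = -√2/2`, so every term of the sum defining
`d^j_{m,m'}` carries the same power `2^{-j}`, and its sign `(-1)^{m'-m+p} (-1)^{2j+m-m'-2p}` reduces
to `(-1)^p`. Shifting the summation index to the bottom of its range (`p = m - m' + k` or `p = k`)
leaves a sum of `(-1)^k / ((A-k)! (B-k)! (M+k)! k!)`, which is the terminating `₂F₁(-A, -B; 1+M; -1)`
because `(-A)^{(k)} = (-1)^k A!/(A-k)!` and `(1+M)^{(k)} = (M+k)!/M!`. The phase `e^{i(m'-m)π/2}`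
equals `i^{m'-m}`, and `i^2 = -1` absorbs the sign `(-1)^{m-m'}` of the first case.
-/

namespace Stmt12

noncomputable section

/-- Pochhammer symbol `(a)^{(k)} = a(a+1)⋯(a+k−1)`. -/
def pochN (a : ℂ) (k : ℕ) : ℂ := ∏ i ∈ Finset.range k, (a + i)

/-- The Wigner little-`d` function `d^j_{m,m'}(θ)`. -/
def littled (j : ℕ) (m m' : ℤ) (θ : ℝ) : ℂ :=
  ∑ p ∈ Finset.Icc (max 0 (m - m')) (min ((j : ℤ) - m') ((j : ℤ) + m)),
    ((-1 : ℂ) ^ (m' - m + p) /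
        ((Nat.factorial ((j : ℤ) + m - p).toNat : ℂ) * (Nat.factorial p.toNat : ℂ) *
          (Nat.factorial (m' - m + p).toNat : ℂ) *
          (Nat.factorial ((j : ℤ) - m' - p).toNat : ℂ))) *
      ((Real.sin (θ / 2) : ℂ)) ^ (m' - m + 2 * p).toNat *
      ((Real.cos (θ / 2) : ℂ)) ^ (2 * (j : ℤ) + m - m' - 2 * p).toNat

open Finset Nat Real

lemma pochN_succ (a : ℂ) (k : ℕ) : pochN a (k + 1) = pochN a k * (a + k) :=
  prod_range_succ _ _

lemma pochN_neg_natCast_mul_factorial {A k : ℕ} (hk : k ≤ A) :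
    pochN (-A) k * (A - k)! = (-1) ^ k * A ! := by
  induction k with
  | zero => simp [pochN]
  | succ k ih =>
    have hsucc : A - k = (A - (k + 1)) + 1 := by omega
    rw [hsucc, factorial_succ] at ih
    rw [pochN_succ, pow_succ]
    push_cast [Nat.cast_sub hk] at ih ⊢
    linear_combination (-1) * ih (by omega)

lemma pochN_one_add_natCast_mul_factorial (M k : ℕ) : pochN (1 + M) k * M ! = (M + k)! := by
  induction k with
  | zero => simp [pochN]
  | succ k ih =>
    rw [pochN_succ, ← add_assoc, factorial_succ, Nat.cast_mul, ← ih]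
    push_cast
    ring

lemma sum_neg_one_pow_div_factorials_eq_pochN (A B M : ℕ) :
    ∑ k ∈ range (min A B + 1), (-1 : ℂ) ^ k / ((A - k)! * (B - k)! * (M + k)! * k !) =
      ((A ! : ℂ) * M ! * B !)⁻¹ * ∑ k ∈ range (min A B + 1),
        pochN (-A) k * pochN (-B) k / (pochN (1 + M) k * k !) * (-1) ^ k := by
  rw [mul_sum]
  refine sum_congr rfl fun k hk => ?_
  have hkA : k ≤ A := by grind
  have hkB : k ≤ B := by grind
  have hfac (n : ℕ) : (n ! : ℂ) ≠ 0 := by exact_mod_cast factorial_ne_zero n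
  rw [eq_div_iff (hfac _) |>.mpr (pochN_neg_natCast_mul_factorial hkA),
    eq_div_iff (hfac _) |>.mpr (pochN_neg_natCast_mul_factorial hkB),
    eq_div_iff (hfac _) |>.mpr (pochN_one_add_natCast_mul_factorial M k)]
  field_simp [hfac]
  rw [← pow_mul, mul_comm, pow_mul, neg_one_sq, one_pow]

lemma littled_three_pi_div_two (j : ℕ) (m m' : ℤ) :
    littled j m m' (3 * π / 2) = 2 ^ (-(j : ℤ)) *
      ∑ p ∈ Icc (max 0 (m - m')) (min ((j : ℤ) - m') ((j : ℤ) + m)),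
        (-1 : ℂ) ^ p / (((j + m - p).toNat ! : ℂ) * (p.toNat ! : ℂ) *
          ((m' - m + p).toNat ! : ℂ) * ((j - m' - p).toNat ! : ℂ)) := by
  have hangle : 3 * π / 2 / 2 = π - π / 4 := by ring
  have hsin : (Real.sin (3 * π / 2 / 2) : ℂ) = √2 / 2 := by
    rw [hangle, sin_pi_sub, sin_pi_div_four]; push_cast; rfl
  have hcos : (Real.cos (3 * π / 2 / 2) : ℂ) = -(√2 / 2) := by
    rw [hangle, cos_pi_sub, cos_pi_div_four]; push_cast; rfl
  have hsq : ((√2 : ℂ) / 2) ^ 2 = 2⁻¹ := by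
    rw [div_pow, ← Complex.ofReal_pow, sq_sqrt zero_le_two]; norm_num
  rw [littled, mul_sum]
  refine sum_congr rfl fun p hp => ?_
  rw [mem_Icc] at hp
  obtain ⟨x, hx⟩ : ∃ x : ℕ, m' - m + 2 * p = x := ⟨_, (Int.toNat_of_nonneg (by omega)).symm⟩
  obtain ⟨y, hy⟩ : ∃ y : ℕ, 2 * j + m - m' - 2 * p = y :=
    ⟨_, (Int.toNat_of_nonneg (by omega)).symm⟩
  have hsign : (-1 : ℂ) ^ (m' - m + p) * (-1) ^ y = (-1) ^ p := by
    rw [← zpow_natCast, ← zpow_add₀ (by norm_num), show m' - m + p + y = p + 2 * (j - p) by omega,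
      zpow_add₀ (by norm_num), (even_two_mul _).neg_one_zpow, mul_one]
  have hpow : ((√2 : ℂ) / 2) ^ x * (√2 / 2) ^ y = 2 ^ (-(j : ℤ)) := by
    rw [← pow_add, show x + y = 2 * j by omega, pow_mul, hsq, inv_pow, zpow_neg, zpow_natCast]
  rw [hx, hy, Int.toNat_natCast, Int.toNat_natCast, hsin, hcos, neg_pow, ← hsign, ← hpow]
  ring

lemma sum_Icc_add_natCast {M : Type*} [AddCommMonoid M] (f : ℤ → M) (a : ℤ) (n : ℕ) :
    ∑ p ∈ Icc a (a + n), f p = ∑ k ∈ range (n + 1), f (a + k) := by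
  rw [Int.Icc_eq_finset_map, sum_map, show (a + n + 1 - a).toNat = n + 1 by omega]
  rfl

lemma littled_three_pi_div_two_of_sub_eq {j a b μ : ℕ} {m m' : ℤ} (hμ : m - m' = μ)
    (ha : j - m = a) (hb : j + m' = b) :
    littled j m m' (3 * π / 2) = (-1) ^ μ * 2 ^ (-(j : ℤ)) *
      ∑ k ∈ range (min a b + 1), (-1 : ℂ) ^ k / ((a - k)! * (b - k)! * (μ + k)! * k !) := by
  rw [littled_three_pi_div_two, show max 0 (m - m') = μ by omega,
    show min (j - m') (j + m) = μ + (min a b : ℕ) by omega, sum_Icc_add_natCast,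
    mul_comm ((-1 : ℂ) ^ μ), mul_assoc]
  congr 1
  rw [mul_sum]
  refine sum_congr rfl fun k hk => ?_
  rw [mem_range] at hk
  rw [show (j + m - (μ + k)).toNat = b - k by omega, show ((μ : ℤ) + k).toNat = μ + k by omega,
    show (m' - m + (μ + k)).toNat = k by omega, show (j - m' - (μ + k)).toNat = a - k by omega,
    ← Nat.cast_add, zpow_natCast, pow_add]
  ring

lemma littled_three_pi_div_two_of_sub_eq' {j a b ν : ℕ} {m m' : ℤ} (hν : m' - m = ν)
    (ha : j + m = a) (hb : j - m' = b) :
    littled j m m' (3 * π / 2) = 2 ^ (-(j : ℤ)) *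
      ∑ k ∈ range (min a b + 1), (-1 : ℂ) ^ k / ((a - k)! * (b - k)! * (ν + k)! * k !) := by
  rw [littled_three_pi_div_two, show max 0 (m - m') = 0 by omega,
    show min (j - m') (j + m) = 0 + (min a b : ℕ) by omega, sum_Icc_add_natCast]
  congr 1
  refine sum_congr rfl fun k hk => ?_
  rw [mem_range] at hk
  rw [zero_add, show (j + m - k).toNat = a - k by omega, Int.toNat_natCast,
    show (m' - m + k).toNat = ν + k by omega, show (j - m' - k).toNat = b - k by omega,
    zpow_natCast]
  ring

lemma exp_I_mul_intCast_mul_pi_div_two (n : ℤ) :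
    Complex.exp (Complex.I * n * π / 2) = Complex.I ^ n := by
  rw [show Complex.I * n * π / 2 = n * (π / 2 * Complex.I) by ring, Complex.exp_int_mul,
    Complex.exp_pi_div_two_mul_I]

lemma I_zpow_mul_littled_three_pi_div_two_of_le {j : ℕ} {m m' : ℤ} (hm : m ≤ j) (hm' : -j ≤ m')
    (h : m' ≤ m) :
    Complex.I ^ (m' - m) * littled j m m' (3 * π / 2) =
      Complex.I ^ (m - m') * 2 ^ (-(j : ℤ)) /
          (((j - m).toNat ! : ℂ) * ((m - m').toNat ! : ℂ) * ((j + m').toNat ! : ℂ)) *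
        ∑ k ∈ range (min (j - m).toNat (j + m').toNat + 1),
          pochN (-(j : ℂ) + m) k * pochN (-(j : ℂ) - m') k /
            (pochN (1 + (m : ℂ) - m') k * k !) * (-1) ^ k := by
  obtain ⟨a, ha⟩ := Int.eq_ofNat_of_zero_le (sub_nonneg.mpr hm)
  obtain ⟨b, hb⟩ := Int.eq_ofNat_of_zero_le (neg_le_iff_add_nonneg'.mp hm')
  obtain ⟨μ, hμ⟩ := Int.eq_ofNat_of_zero_le (sub_nonneg.mpr h)
  have haC : (j : ℂ) - m = a := by exact_mod_cast ha
  have hbC : (j : ℂ) + m' = b := by exact_mod_cast hb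
  have hμC : (m : ℂ) - m' = μ := by exact_mod_cast hμ
  have hsign : Complex.I ^ (m' - m) * (-1) ^ μ = Complex.I ^ (m - m') := by
    rw [← Complex.I_sq, ← pow_mul, ← zpow_natCast, ← zpow_add₀ Complex.I_ne_zero]
    congr 1
    push_cast
    omega
  rw [littled_three_pi_div_two_of_sub_eq hμ ha hb, ← hsign, ha, hb, hμ,
    Int.toNat_natCast, Int.toNat_natCast, Int.toNat_natCast,
    show -(j : ℂ) + m = -a by rw [← haC]; ring, show -(j : ℂ) - m' = -b by rw [← hbC]; ring,
    show 1 + (m : ℂ) - m' = 1 + μ by rw [← hμC]; ring, sum_neg_one_pow_div_factorials_eq_pochN]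
  ring

lemma I_zpow_mul_littled_three_pi_div_two_of_ge {j : ℕ} {m m' : ℤ} (hm : -j ≤ m) (hm' : m' ≤ j)
    (h : m ≤ m') :
    Complex.I ^ (m' - m) * littled j m m' (3 * π / 2) =
      Complex.I ^ (m' - m) * 2 ^ (-(j : ℤ)) /
          (((j + m).toNat ! : ℂ) * ((m' - m).toNat ! : ℂ) * ((j - m').toNat ! : ℂ)) *
        ∑ k ∈ range (min (j + m).toNat (j - m').toNat + 1),
          pochN (-(j : ℂ) - m) k * pochN (-(j : ℂ) + m') k /
            (pochN (1 - (m : ℂ) + m') k * k !) * (-1) ^ k := by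
  obtain ⟨a, ha⟩ := Int.eq_ofNat_of_zero_le (neg_le_iff_add_nonneg'.mp hm)
  obtain ⟨b, hb⟩ := Int.eq_ofNat_of_zero_le (sub_nonneg.mpr hm')
  obtain ⟨ν, hν⟩ := Int.eq_ofNat_of_zero_le (sub_nonneg.mpr h)
  have haC : (j : ℂ) + m = a := by exact_mod_cast ha
  have hbC : (j : ℂ) - m' = b := by exact_mod_cast hb
  have hνC : (m' : ℂ) - m = ν := by exact_mod_cast hν
  rw [littled_three_pi_div_two_of_sub_eq' hν ha hb, ha, hb, hν,
    Int.toNat_natCast, Int.toNat_natCast, Int.toNat_natCast,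
    show -(j : ℂ) - m = -a by rw [← haC]; ring, show -(j : ℂ) + m' = -b by rw [← hbC]; ring,
    show 1 - (m : ℂ) + m' = 1 + ν by rw [← hνC]; ring, sum_neg_one_pow_div_factorials_eq_pochN]
  ring

/-- The change-of-basis matrix entries `e^{i(m4−m3)π/2}·d^j_{m3,m4}(3π/2)` as terminating
`₂F₁(…;−1)` sums. -/
theorem stmt_12 (j : ℕ) (m3 m4 : ℤ) (h3 : |m3| ≤ (j : ℤ)) (h4 : |m4| ≤ (j : ℤ)) :
    (m4 < m3 →
      Complex.exp (Complex.I * ((m4 : ℂ) - m3) * Real.pi / 2) *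
          littled j m3 m4 (3 * Real.pi / 2) =
        Complex.I ^ (m3 - m4) * (2 : ℂ) ^ (-(j : ℤ)) /
            ((Nat.factorial ((j : ℤ) - m3).toNat : ℂ) *
              (Nat.factorial (m3 - m4).toNat : ℂ) *
              (Nat.factorial ((j : ℤ) + m4).toNat : ℂ)) *
          ∑ k ∈ Finset.range (min ((j : ℤ) - m3).toNat ((j : ℤ) + m4).toNat + 1),
            (pochN (-(j : ℂ) + m3) k * pochN (-(j : ℂ) - m4) k) /
                (pochN (1 + (m3 : ℂ) - m4) k * (Nat.factorial k : ℂ)) * (-1 : ℂ) ^ k) ∧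
      (m3 ≤ m4 →
        Complex.exp (Complex.I * ((m4 : ℂ) - m3) * Real.pi / 2) *
            littled j m3 m4 (3 * Real.pi / 2) =
          Complex.I ^ (m4 - m3) * (2 : ℂ) ^ (-(j : ℤ)) /
              ((Nat.factorial ((j : ℤ) + m3).toNat : ℂ) *
                (Nat.factorial (m4 - m3).toNat : ℂ) *
                (Nat.factorial ((j : ℤ) - m4).toNat : ℂ)) *
            ∑ k ∈ Finset.range (min ((j : ℤ) + m3).toNat ((j : ℤ) - m4).toNat + 1),
              (pochN (-(j : ℂ) - m3) k * pochN (-(j : ℂ) + m4) k) /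
                  (pochN (1 - (m3 : ℂ) + m4) k * (Nat.factorial k : ℂ)) * (-1 : ℂ) ^ k) := by
  obtain ⟨h3l, h3u⟩ := abs_le.mp h3
  obtain ⟨h4l, h4u⟩ := abs_le.mp h4
  have hexp : Complex.exp (Complex.I * ((m4 : ℂ) - m3) * Real.pi / 2) = Complex.I ^ (m4 - m3) := by
    exact_mod_cast exp_I_mul_intCast_mul_pi_div_two (m4 - m3)
  rw [hexp]
  exact ⟨fun hlt => I_zpow_mul_littled_three_pi_div_two_of_le h3u h4l hlt.le,
    fun hle => I_zpow_mul_littled_three_pi_div_two_of_ge h3l h4u hle⟩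

end

end Stmt12
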